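/- For all partial multifunctions f : ⊆ (X₀,δ_{X₀}) ⇉ (Y₀,δ_{Y₀}) and g : ⊆ (X₁,δ_{X₁}) ⇉ (Y₁,δ_{Y₁}) on represented spaces, f ⊞ g ≡_W f ⊔ g; indeed f ⊞ g ≤_sW f ⊔ g and f ⊔ g ≤_W f ⊞ g. -/

import Mathlib

attribute [local instance] Classical.propDecidable

namespace StrongWeihrauch

noncomputable section

/-! ### Cantor space, monotone approximations, and the evaluation map -/

/-- Cantor space `2^ω`; we identify subsets of `ω` with their characteristic functions. -/
abbrev Cantor : Type := ℕ → Bool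

/-- The coded triple `⟨n,s,i⟩`. -/
def tpl (n s i : ℕ) : ℕ := Nat.pair n (Nat.pair s i)

/-- A monotone approximation (Definition 3.1): every element has the form `⟨n,s,i⟩` with
`i < 2`; for each `n` there is at most one pair `(s,i)` with `⟨n,s,i⟩ ∈ a`; and the stages `s`
are strictly increasing in `n`. -/
def MonotoneApprox (a : Cantor) : Prop :=
  (∀ k, a k = true → ∃ n s i, i < 2 ∧ k = tpl n s i) ∧
  (∀ n s t i j, a (tpl n s i) = true → a (tpl n t j) = true → s = t ∧ i = j) ∧
  (∀ m n s t i j, a (tpl m s i) = true → a (tpl n t j) = true → m < n → s < t)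

/-- A total monotone approximation: every `n` gets a value. -/
def TotalMonotoneApprox (a : Cantor) : Prop :=
  MonotoneApprox a ∧ ∀ n, ∃ s i, i < 2 ∧ a (tpl n s i) = true

/-- The value of the evaluation map `e` on a (total) monotone approximation:
`eVal a n = i` iff `⟨n,s,i⟩ ∈ a` for some `s`. -/
def eVal (a : Cantor) : Cantor := fun n => decide (∃ s, a (tpl n s 1) = true)

/-- The evaluation map `e : ⊆ 2^ω → 2^ω`, the partial function whose domain is the set of
total monotone approximations `a`, with `e(a)(n) = i` iff `⟨n,s,i⟩ ∈ a` for some `s`. -/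
def evalMA : Cantor →. Cantor := fun a => ⟨TotalMonotoneApprox a, fun _ => eVal a⟩

/-! ### Turing functionals -/

/-- The oracle information available at stage `s`: the first `s` bits of `p`. -/
def initSeg (p : Cantor) (s : ℕ) : List Bool := (List.range s).map p

/-- A `{0,1}`-valued Turing functional on Cantor space, presented by a computable monotone
finite-prefix approximation: `approx σ n = some b` means that the computation on input `n`
with oracle prefix `σ` has converged, with output `b`. -/
structure TuringFunctional where
  approx : List Bool → ℕ → Option Bool
  computable : Computable₂ approx
  mono : ∀ σ τ n b, σ <+: τ → approx σ n = some b → approx τ n = some b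

namespace TuringFunctional

/-- `Φ^p(n)[s]↓`. -/
def ConvAt (Φ : TuringFunctional) (p : Cantor) (n s : ℕ) : Prop :=
  (Φ.approx (initSeg p s) n).isSome = true

/-- `s` is least such that `Φ^p(n)[s]↓`. -/
def LeastStage (Φ : TuringFunctional) (p : Cantor) (n s : ℕ) : Prop :=
  Φ.ConvAt p n s ∧ ∀ t, t < s → ¬ Φ.ConvAt p n t

/-- Convention 2.1: if `Φ^p(n)[s]↓` then `Φ^p(m)[s]↓` for all `m < n`, and for each `s`
there is at most one `n` for which `s` is least with `Φ^p(n)[s]↓`. -/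
def Convention (Φ : TuringFunctional) : Prop :=
  (∀ (p : Cantor) (s n m : ℕ), m < n → Φ.ConvAt p n s → Φ.ConvAt p m s) ∧
  (∀ (p : Cantor) (s n n' : ℕ), Φ.LeastStage p n s → Φ.LeastStage p n' s → n = n')

/-- The partial function `⊆ 2^ω → 2^ω` computed by `Φ`; it is defined at `p` exactly when
`Φ(p)` is total, in which case its value is the map `n ↦ Φ^p(n)`. -/
def eval (Φ : TuringFunctional) : Cantor →. Cantor :=
  fun p => ⟨∀ n, ∃ s b, Φ.approx (initSeg p s) n = some b,
    fun h n => (h n).choose_spec.choose⟩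

end TuringFunctional

/-- `a_{Φ(p)}`: the set of all `⟨n,s,i⟩` where `s` is least such that `Φ^p(n)[s]↓ = i`. -/
def approxSeq (Φ : TuringFunctional) (p : Cantor) : Cantor := fun k =>
  decide (∃ n s b, k = tpl n s (Bool.toNat b) ∧ Φ.LeastStage p n s ∧
    Φ.approx (initSeg p s) n = some b)

/-- Turing reducibility `q ≤_T p` on Cantor space. -/
def TuringLe (q p : Cantor) : Prop := ∃ Φ : TuringFunctional, Φ.eval p = Part.some q

/-! ### Pairing on Cantor space -/

/-- The effective join `⟨p,q⟩` on Cantor space. -/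
def pairC (p q : Cantor) : Cantor := fun n => if n % 2 = 0 then p (n / 2) else q (n / 2)

def leftC (r : Cantor) : Cantor := fun n => r (2 * n)

def rightC (r : Cantor) : Cantor := fun n => r (2 * n + 1)

/-- The singleton `{i} ⊆ ω` as an element of Cantor space. -/
def natSet (i : ℕ) : Cantor := fun n => decide (n = i)

/-- `⟨i,p⟩`, i.e. `⟨{i},p⟩`. -/
def inC (i : ℕ) (p : Cantor) : Cantor := pairC (natSet i) p

lemma leftC_pairC (p q : Cantor) : leftC (pairC p q) = p := by
  funext n
  have h1 : 2 * n % 2 = 0 := by omega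
  have h2 : 2 * n / 2 = n := by omega
  simp [leftC, pairC, h1, h2]

lemma rightC_pairC (p q : Cantor) : rightC (pairC p q) = q := by
  funext n
  have h1 : (2 * n + 1) % 2 = 1 := by omega
  have h2 : (2 * n + 1) / 2 = n := by omega
  simp [rightC, pairC, h1, h2]

lemma tpl_inj {n s i n' s' i' : ℕ} (h : tpl n s i = tpl n' s' i') :
    n = n' ∧ s = s' ∧ i = i' := by
  unfold tpl at h
  rw [Nat.pair_eq_pair] at h
  rcases h with ⟨h1, h2⟩
  rw [Nat.pair_eq_pair] at h2
  exact ⟨h1, h2.1, h2.2⟩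

lemma toNat_lt_two (b : Bool) : b.toNat < 2 := by cases b <;> decide

/-- Encoding of `q ∈ 2^ω` as a total monotone approximation evaluating to `q`. -/
def maEncode (q : Cantor) : Cantor := fun k => decide (∃ n, k = tpl n n (q n).toNat)

lemma maEncode_mem {q : Cantor} {k : ℕ} :
    maEncode q k = true ↔ ∃ n, k = tpl n n (q n).toNat := by
  simp [maEncode]

lemma maEncode_total (q : Cantor) : TotalMonotoneApprox (maEncode q) := by
  refine ⟨⟨?_, ?_, ?_⟩, ?_⟩
  · intro k hk
    obtain ⟨n, rfl⟩ := maEncode_mem.mp hk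
    exact ⟨n, n, (q n).toNat, toNat_lt_two _, rfl⟩
  · intro n s t i j h1 h2
    obtain ⟨m, hm⟩ := maEncode_mem.mp h1
    obtain ⟨m', hm'⟩ := maEncode_mem.mp h2
    obtain ⟨e1, e2, e3⟩ := tpl_inj hm
    obtain ⟨f1, f2, f3⟩ := tpl_inj hm'
    have hmm' : m = m' := by omega
    refine ⟨by omega, by rw [e3, f3, hmm']⟩
  · intro m n s t i j h1 h2 hmn
    obtain ⟨u, hu⟩ := maEncode_mem.mp h1
    obtain ⟨v, hv⟩ := maEncode_mem.mp h2
    obtain ⟨e1, e2, _⟩ := tpl_inj hu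
    obtain ⟨f1, f2, _⟩ := tpl_inj hv
    omega
  · intro n
    exact ⟨n, (q n).toNat, toNat_lt_two _, maEncode_mem.mpr ⟨n, rfl⟩⟩

lemma eVal_maEncode (q : Cantor) : eVal (maEncode q) = q := by
  funext n
  have hiff : (∃ s, maEncode q (tpl n s 1) = true) ↔ q n = true := by
    constructor
    · rintro ⟨s, hs⟩
      obtain ⟨m, hm⟩ := maEncode_mem.mp hs
      obtain ⟨e1, e2, e3⟩ := tpl_inj hm
      subst e1
      cases hq : q n
      · rw [hq] at e3; simp at e3
      · rfl
    · intro hq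
      refine ⟨n, maEncode_mem.mpr ⟨n, ?_⟩⟩
      rw [hq]
      rfl
  cases hq : q n
  · have hne : ¬ (∃ s, maEncode q (tpl n s 1) = true) := by
      intro h
      have ht := hiff.mp h
      rw [ht] at hq
      exact Bool.noConfusion hq
    simp [eVal, hne]
  · simp [eVal, hiff.mpr hq]

/-- An explicit non-(monotone approximation). -/
def badMA : Cantor := fun k => decide (k = tpl 0 0 0 ∨ k = tpl 0 1 0)

lemma badMA_not : ¬ TotalMonotoneApprox badMA := by
  rintro ⟨⟨-, h2, -⟩, -⟩
  have ha : badMA (tpl 0 0 0) = true := by simp [badMA]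
  have hb : badMA (tpl 0 1 0) = true := by simp [badMA]
  have := (h2 0 0 1 0 0 ha hb).1
  omega

/-! ### Represented spaces -/

/-- A represented space: a set `X` together with a partial surjection `δ : ⊆ 2^ω → X`. -/
structure RepSp : Type 1 where
  X : Type
  δ : Cantor →. X
  surj : ∀ x : X, ∃ p, x ∈ δ p

namespace RepSp

/-- The product representation of `X₀ × X₁`: `δ(⟨p₀,p₁⟩) = (δ₀(p₀), δ₁(p₁))`. -/
def prod (A B : RepSp) : RepSp where
  X := A.X × B.X
  δ := fun r => (A.δ (leftC r)).bind fun x => (B.δ (rightC r)).map fun y => (x, y)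
  surj := by
    rintro ⟨x, y⟩
    obtain ⟨p, hp⟩ := A.surj x
    obtain ⟨q, hq⟩ := B.surj y
    refine ⟨pairC p q, ?_⟩
    simp only [leftC_pairC, rightC_pairC, Part.mem_bind_iff]
    exact ⟨x, hp, Part.mem_map _ hq⟩

/-- The disjoint-union representation of `X₀ ⊔ X₁`: `δ(⟨i,p⟩) = ⟨i, δᵢ(p)⟩`. -/
def sum (A B : RepSp) : RepSp where
  X := A.X ⊕ B.X
  δ := fun r =>
    if leftC r = natSet 0 then (A.δ (rightC r)).map Sum.inl
    else if leftC r = natSet 1 then (B.δ (rightC r)).map Sum.inr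
    else Part.none
  surj := by
    rintro (x | y)
    · obtain ⟨p, hp⟩ := A.surj x
      refine ⟨inC 0 p, ?_⟩
      have e1 : leftC (inC 0 p) = natSet 0 := leftC_pairC _ _
      have e2 : rightC (inC 0 p) = p := rightC_pairC _ _
      simp only [e1, e2, if_pos rfl]
      exact Part.mem_map _ hp
    · obtain ⟨p, hp⟩ := B.surj y
      refine ⟨inC 1 p, ?_⟩
      have e1 : leftC (inC 1 p) = natSet 1 := leftC_pairC _ _
      have e2 : rightC (inC 1 p) = p := rightC_pairC _ _
      have hne : natSet 1 ≠ natSet 0 := by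
        intro h
        have := congrFun h 0
        simp [natSet] at this
      simp only [e1, e2, hne, if_neg, if_pos rfl, ite_false, ite_true]
      exact Part.mem_map _ hp

/-- The completion `Ŷ = Y ∪ {∞_Y}` (with `∞_Y` rendered as `none`), represented by
`δ_Ŷ(p) = δ_Y(e(p))` if `p` is a total monotone approximation with `e(p) ∈ dom(δ_Y)`, and
`δ_Ŷ(p) = ∞_Y` otherwise. -/
def hat (A : RepSp) : RepSp where
  X := Option A.X
  δ := fun p => Part.some (((evalMA p).bind A.δ).toOption)
  surj := by
    intro y
    match y with
    | none =>
        refine ⟨badMA, ?_⟩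
        rw [Part.mem_some_iff]
        have hd : ¬ ((evalMA badMA).bind A.δ).Dom := by
          rintro ⟨h1, -⟩
          exact badMA_not h1
        rw [eq_comm, Part.toOption_eq_none_iff]
        exact hd
    | some x =>
        obtain ⟨p, hp⟩ := A.surj x
        refine ⟨maEncode p, ?_⟩
        rw [Part.mem_some_iff, eq_comm, Part.toOption_eq_some_iff]
        exact Part.mem_bind
          (show p ∈ evalMA (maEncode p) from ⟨maEncode_total p, eVal_maEncode p⟩) hp

end RepSp

/-! ### Partial multifunctions and the Weihrauch reducibilities -/

/-- A partial multifunction `f : ⊆ X ⇉ Y` between represented spaces: `f.f x` is the set of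
solutions of the instance `x`, and the domain of `f` is the set of `x` with `f.f x ≠ ∅`. -/
structure MFn : Type 1 where
  A : RepSp
  B : RepSp
  f : A.X → Set B.X

namespace MFn

/-- The coproduct `f ⊔ g`. -/
def sqcup (f g : MFn) : MFn where
  A := f.A.sum g.A
  B := f.B.sum g.B
  f := Sum.elim (fun x => Sum.inl '' f.f x) (fun y => Sum.inr '' g.f y)

/-- The meet `f ⊓ g`, with `(f ⊓ g)(⟨x,y⟩) = ({0} × f(x)) ∪ ({1} × g(y))` for
`x ∈ dom f`, `y ∈ dom g`. -/
def sqcap (f g : MFn) : MFn where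
  A := f.A.prod g.A
  B := f.B.sum g.B
  f := fun xy =>
    if (f.f xy.1).Nonempty ∧ (g.f xy.2).Nonempty then
      (Sum.inl '' f.f xy.1) ∪ (Sum.inr '' g.f xy.2)
    else ∅

/-- The join `f ⊞ g : ⊆ X₀ ⊔ X₁ ⇉ Ŷ₀ × Ŷ₁`, with `(f ⊞ g)(⟨0,x⟩) = f(x) × Ŷ₁` and
`(f ⊞ g)(⟨1,x⟩) = Ŷ₀ × g(x)`. -/
def boxplus (f g : MFn) : MFn where
  A := f.A.sum g.A
  B := (f.B.hat).prod (g.B.hat)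
  f := Sum.elim
    (fun x => (Option.some '' f.f x) ×ˢ (Set.univ : Set (Option g.B.X)))
    (fun y => (Set.univ : Set (Option f.B.X)) ×ˢ (Option.some '' g.f y))

end MFn

/-- `F ⊢ f`: the partial function `F : ⊆ 2^ω → 2^ω` is a realizer of `f`, i.e.
`δ_Y F(p) ∈ f δ_X(p)` for every `p ∈ dom(f δ_X)`. -/
def Realizes (F : Cantor →. Cantor) (f : MFn) : Prop :=
  ∀ p x, x ∈ f.A.δ p → (f.f x).Nonempty →
    ∃ q ∈ F p, ∃ y ∈ f.B.δ q, y ∈ f.f x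

/-- Composition of partial functions on Cantor space: `pcomp F G = F ∘ G`. -/
def pcomp (F G : Cantor →. Cantor) : Cantor →. Cantor := fun p => (G p).bind F

/-- Strong Weihrauch reducibility: `f ≤_sW g` iff there are Turing functionals `Φ, Ψ` with
`Ψ G Φ ⊢ f` for every `G ⊢ g`. -/
def sWLe (f g : MFn) : Prop :=
  ∃ Φ Ψ : TuringFunctional, ∀ G : Cantor →. Cantor, Realizes G g →
    Realizes (pcomp Ψ.eval (pcomp G Φ.eval)) f

/-- Strong Weihrauch equivalence. -/
def sWEq (f g : MFn) : Prop := sWLe f g ∧ sWLe g f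

/-- Weihrauch reducibility: `f ≤_W g` iff there are Turing functionals `Φ, Ψ` with
`Ψ⟨id, G Φ⟩ ⊢ f` for every `G ⊢ g`. -/
def wLe (f g : MFn) : Prop :=
  ∃ Φ Ψ : TuringFunctional, ∀ G : Cantor →. Cantor, Realizes G g →
    Realizes (fun p => (pcomp G Φ.eval p).bind fun q => Ψ.eval (pairC p q)) f

/-- Weihrauch equivalence. -/
def wEq (f g : MFn) : Prop := wLe f g ∧ wLe g f

/-- Cantor space as a represented space, with the identity representation. -/
def CantorSp : RepSp where
  X := Cantor
  δ := fun p => Part.some p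
  surj := fun p => ⟨p, Part.mem_some_iff.mpr rfl⟩

/-- A partial multifunction on Cantor space, viewed as a multifunction on represented
spaces via the identity representation. -/
def ofCantor (F : Cantor → Set Cantor) : MFn := ⟨CantorSp, CantorSp, F⟩

/-! ### Further definitions used in the statements -/

/-- `c` is an index for the Turing functional `Ψ`. -/
def codesTF (c : Nat.Partrec.Code) (Ψ : TuringFunctional) : Prop :=
  ∀ (σ : List Bool) (n : ℕ),
    c.eval (Nat.pair (Encodable.encode σ) n) = Part.some (Encodable.encode (Ψ.approx σ n))

/-- The multifunction `h` of Lemma 4.4: `h(⟨0,p⟩)` consists of all pairs `⟨a,q⟩` where `a`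
is a total monotone approximation with `e(a) ∈ F(p)`, and `h(⟨1,p⟩)` of all pairs `⟨q,a⟩`
where `a` is a total monotone approximation with `e(a) ∈ G(p)`. -/
def hJoin (F G : Cantor → Set Cantor) : Cantor → Set Cantor := fun r =>
  {z | leftC r = natSet 0 ∧
    ∃ a q, z = pairC a q ∧ TotalMonotoneApprox a ∧ eVal a ∈ F (rightC r)} ∪
  {z | leftC r = natSet 1 ∧
    ∃ q a, z = pairC q a ∧ TotalMonotoneApprox a ∧ eVal a ∈ G (rightC r)}

/-- A single-valued partial function on Cantor space, viewed as a partial multifunction on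
represented spaces (via the identity representation). -/
def pfnToM (F : Cantor →. Cantor) : MFn := ofCantor fun p => {q | q ∈ F p}

/-- The single-point partial function `{p} → {q}`. -/
def singleFn (p q : Cantor) : MFn := ofCantor fun r => if r = p then {q} else ∅

/-- `A` is Medvedev reducible to `B`. -/
def MedvedevLe (A B : Set Cantor) : Prop :=
  ∃ Φ : TuringFunctional, ∀ p ∈ B, ∃ q ∈ Φ.eval p, q ∈ A

/-- The all-zero sequence `0^ω`. -/
def zeroSeq : Cantor := fun _ => false

/-- `d_A : A → {0^ω}`. -/
def dFn (A : Set Cantor) : MFn := ofCantor fun p => if p ∈ A then {zeroSeq} else ∅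

/-- `A ⊔ B ⊆ 2^ω`: all `⟨i,p⟩` with `i < 2` and `p ∈ A` if `i = 0`, `p ∈ B` if `i = 1`. -/
def setSum (A B : Set Cantor) : Set Cantor :=
  {r | ∃ p ∈ A, r = inC 0 p} ∪ {r | ∃ p ∈ B, r = inC 1 p}

/-- `A × B ⊆ 2^ω`: all pairs `⟨p,q⟩` with `p ∈ A` and `q ∈ B`. -/
def setProd (A B : Set Cantor) : Set Cantor := {r | ∃ p ∈ A, ∃ q ∈ B, r = pairC p q}

/-- `p` is a name of an instance of `f`. -/
def domName (f : MFn) (p : Cantor) : Prop := ∃ x ∈ f.A.δ p, (f.f x).Nonempty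

/-- `q` is a name of a solution to the instance of `f` named by `p`. -/
def solName (f : MFn) (p q : Cantor) : Prop :=
  ∃ x ∈ f.A.δ p, ∃ y ∈ f.B.δ q, y ∈ f.f x

/-- Strong computable reducibility `f ≤_sc g`: every name `p` of an instance of `f`
computes a name `p'` of an instance of `g` such that every name of a solution to the
latter computes a name of a solution to the former. -/
def scLe (f g : MFn) : Prop :=
  ∀ p, domName f p → ∃ p', TuringLe p' p ∧ domName g p' ∧
    ∀ q, solName g p' q → ∃ z, TuringLe z q ∧ solName f p z

/-- Strong computable equivalence. -/
def scEq (f g : MFn) : Prop := scLe f g ∧ scLe g f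

/-!
From a name `⟨i, y⟩` of a solution of `f ⊔ g` one obtains a name of a solution of `f ⊞ g` without
looking at the instance: encode `y` as a total monotone approximation in component `i` and put the
empty approximation, a name of `∞`, in the other component. Conversely, a name `⟨a₀, a₁⟩` of a
solution of `f ⊞ g` does not reveal which `aᵢ` is total, but the instance `⟨i, x⟩` does, and
`e(aᵢ)` is computable from `aᵢ` by searching for its entries `⟨n, s, b⟩`.

The Turing functionals are built by running a primitive recursive procedure on longer and longer
prefixes of the oracle and keeping the first answer.
-/

theorem _root_.Primrec.list_findSome? {α β σ : Type*} [Primcodable α] [Primcodable β]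
    [Primcodable σ] {f : α → List β} {g : α → β → Option σ} (hf : Primrec f) (hg : Primrec₂ g) :
    Primrec fun a => (f a).findSome? (g a) := by
  have hfoldr : ∀ (l : List β) (h : β → Option σ),
      l.findSome? h = l.foldr (fun b o => h b <|> o) none := by
    intro l h
    induction l with
    | nil => rfl
    | cons b l ih => cases hb : h b <;> simp [hb, ih]
  have hstep : Primrec₂ fun a (bo : β × Option σ) => g a bo.1 <|> bo.2 :=
    Primrec.option_orElse.comp (hg.comp Primrec.fst (Primrec.fst.comp Primrec.snd))
      (Primrec.snd.comp Primrec.snd)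
  exact (Primrec.list_foldr hf (Primrec.const none) hstep).of_eq fun a => (hfoldr _ _).symm

theorem _root_.Primrec.list_inits {α : Type*} [Primcodable α] : Primrec (@List.inits α) := by
  refine (Primrec.list_map (Primrec.list_range.comp (Primrec.succ.comp Primrec.list_length))
    (Primrec.list_take.comp₂ Primrec₂.right Primrec₂.left)).of_eq fun l => ?_
  refine List.ext_getElem (by simp) fun n h₁ h₂ => ?_
  simp [List.getElem_inits]

lemma length_initSeg (p : Cantor) (s : ℕ) : (initSeg p s).length = s := by
  simp [initSeg]

lemma getD_initSeg (p : Cantor) {n s : ℕ} (h : n < s) : (initSeg p s).getD n false = p n := by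
  simp [initSeg, h]

lemma take_initSeg (p : Cantor) {s t : ℕ} (h : t ≤ s) : (initSeg p s).take t = initSeg p t := by
  simp [initSeg, ← List.map_take, List.take_range, h]

lemma initSeg_prefix_initSeg (p : Cantor) {s t : ℕ} (h : s ≤ t) : initSeg p s <+: initSeg p t :=
  take_initSeg p h ▸ List.take_prefix _ _

lemma eq_initSeg_of_prefix {p : Cantor} {l : List Bool} {s : ℕ} (h : l <+: initSeg p s) :
    l = initSeg p l.length := by
  have hlen : l.length ≤ s := length_initSeg p s ▸ h.length_le
  calc l = (initSeg p s).take l.length := List.prefix_iff_eq_take.mp h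
    _ = initSeg p l.length := take_initSeg p hlen

lemma getD_initSeg_eq_true {p : Cantor} {n s : ℕ} :
    (initSeg p s).getD n false = true ↔ n < s ∧ p n = true := by
  by_cases h : n < s
  · rw [getD_initSeg p h]; simp [h]
  · rw [List.getD_eq_default _ _ (by rw [length_initSeg]; omega)]; simp [h]

lemma initSeg_ne_nil {r : Cantor} {t : ℕ} : initSeg r t ≠ [] ↔ 0 < t := by
  rw [Ne, ← List.length_eq_zero_iff, length_initSeg]
  omega

namespace TuringFunctional

lemma approx_agree (Φ : TuringFunctional) {p : Cantor} {n s t : ℕ} {b b' : Bool}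
    (h : Φ.approx (initSeg p s) n = some b) (h' : Φ.approx (initSeg p t) n = some b') :
    b = b' := by
  rcases le_total s t with hst | hts
  · simpa [Φ.mono _ _ _ _ (initSeg_prefix_initSeg p hst) h] using h'
  · simpa [Φ.mono _ _ _ _ (initSeg_prefix_initSeg p hts) h', eq_comm] using h

lemma eval_eq_some (Φ : TuringFunctional) {p z : Cantor}
    (h : ∀ n, ∃ s, Φ.approx (initSeg p s) n = some (z n)) : Φ.eval p = Part.some z := by
  have hdom : ∀ n, ∃ s b, Φ.approx (initSeg p s) n = some b :=
    fun n => ⟨_, _, (h n).choose_spec⟩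
  refine Part.eq_some_iff.mpr ⟨hdom, funext fun n => ?_⟩
  exact Φ.approx_agree (hdom n).choose_spec.choose_spec (h n).choose_spec

/-- The answer of `H` at the shortest prefix of the oracle on which it converges; this makes any
primitive recursive `H` monotone. -/
def ofApprox (H : List Bool → ℕ → Option Bool) (hH : Primrec₂ H) : TuringFunctional where
  approx σ n := σ.inits.findSome? (H · n)
  computable := (Primrec.list_findSome? (Primrec.list_inits.comp Primrec.fst)
    (hH.comp₂ Primrec₂.right (Primrec.snd.comp₂ Primrec₂.left))).to_comp
  mono σ τ n b h hb := by
    obtain ⟨t, rfl⟩ := h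
    simp [List.inits_append, List.findSome?_append, hb]

lemma eval_ofApprox {H : List Bool → ℕ → Option Bool} (hH : Primrec₂ H) {p z : Cantor}
    (hconv : ∀ n, ∃ s, (H (initSeg p s) n).isSome)
    (hval : ∀ n s b, H (initSeg p s) n = some b → b = z n) :
    (ofApprox H hH).eval p = Part.some z := by
  refine eval_eq_some _ fun n => ?_
  obtain ⟨s, hs⟩ := hconv n
  refine ⟨s, ?_⟩
  obtain ⟨b, hb⟩ : ∃ b, (initSeg p s).inits.findSome? (H · n) = some b :=
    Option.isSome_iff_exists.mp (List.findSome?_isSome_iff.mpr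
      ⟨_, (List.mem_inits _ _).mpr (List.prefix_refl _), hs⟩)
  obtain ⟨l, hl, hlb⟩ := List.exists_of_findSome?_eq_some hb
  rw [eq_initSeg_of_prefix ((List.mem_inits _ _).mp hl)] at hlb
  exact hb.trans (congrArg some (hval _ _ _ hlb))

lemma mem_eval_iff (Φ : TuringFunctional) {p z : Cantor} :
    z ∈ Φ.eval p ↔ ∀ n, ∃ s, Φ.approx (initSeg p s) n = some (z n) := by
  constructor
  · rintro ⟨hdom, rfl⟩ n
    exact ⟨_, (hdom n).choose_spec.choose_spec⟩
  · intro h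
    rw [Φ.eval_eq_some h]
    exact Part.mem_some z

/-- The functional computing `F`, when bit `n` of `F p` only depends on `p` up to position
`u n`. -/
def ofModulus (F : Cantor → Cantor) (u : ℕ → ℕ)
    (hF : Primrec₂ fun (σ : List Bool) n => F (σ.getD · false) n) (hu : Primrec u) :
    TuringFunctional :=
  ofApprox (fun σ n => if u n < σ.length then some (F (σ.getD · false) n) else none)
    (Primrec.ite (Primrec.nat_lt.comp (hu.comp Primrec.snd) (Primrec.list_length.comp Primrec.fst))
      (Primrec.option_some.comp hF) (Primrec.const none))

lemma eval_ofModulus {F : Cantor → Cantor} {u : ℕ → ℕ}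
    (hF : Primrec₂ fun (σ : List Bool) n => F (σ.getD · false) n) (hu : Primrec u)
    (hloc : ∀ p p' n, (∀ i ≤ u n, p i = p' i) → F p n = F p' n) (p : Cantor) :
    (ofModulus F u hF hu).eval p = Part.some (F p) := by
  refine eval_ofApprox _ (fun n => ⟨u n + 1, by simp [length_initSeg]⟩) fun n s b h => ?_
  rw [length_initSeg] at h
  split_ifs at h with hs
  rw [← Option.some.inj h]
  exact hloc _ _ n fun i hi => getD_initSeg p (by omega)

protected def id : TuringFunctional := ofModulus id id (Primrec.list_getD false) Primrec.id

lemma eval_id (p : Cantor) : TuringFunctional.id.eval p = Part.some p :=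
  eval_ofModulus _ _ (fun _ _ n h => h n le_rfl) p

end TuringFunctional

lemma pcomp_eval_id (G : Cantor →. Cantor) : pcomp G TuringFunctional.id.eval = G := by
  funext p
  exact (congrArg (Part.bind · G) (TuringFunctional.eval_id p)).trans (Part.bind_some p G)

def oddBits (σ : List Bool) : List Bool :=
  (List.range (σ.length / 2)).map fun i => σ.getD (2 * i + 1) false

lemma primrec_oddBits : Primrec oddBits :=
  Primrec.list_map (Primrec.list_range.comp (Primrec.nat_div.comp Primrec.list_length
    (Primrec.const 2))) ((Primrec.list_getD false).comp₂ Primrec₂.left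
      (Primrec.succ.comp₂ (Primrec.nat_mul.comp₂ (Primrec₂.const 2) Primrec₂.right)))

lemma oddBits_initSeg (r : Cantor) (s : ℕ) :
    oddBits (initSeg r s) = initSeg (rightC r) (s / 2) := by
  simp only [oddBits, initSeg, List.length_map, List.length_range]
  refine List.map_congr_left fun i hi => ?_
  rw [List.mem_range] at hi
  exact getD_initSeg r (by omega)

lemma oddBits_prefix {σ τ : List Bool} (h : σ <+: τ) : oddBits σ <+: oddBits τ := by
  have hlen : σ.length / 2 ≤ τ.length / 2 := Nat.div_le_div_right h.length_le
  rw [List.prefix_iff_eq_take]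
  simp only [oddBits, List.length_map, List.length_range, ← List.map_take, List.take_range,
    min_eq_left hlen]
  refine List.map_congr_left fun i hi => ?_
  rw [List.mem_range] at hi
  obtain ⟨t, rfl⟩ := h
  simp only [List.getD_eq_getElem?_getD,
    List.getElem?_append_left (show 2 * i + 1 < σ.length by omega)]

namespace TuringFunctional

def onRight (Ψ : TuringFunctional) : TuringFunctional where
  approx σ n := Ψ.approx (oddBits σ) n
  computable := Ψ.computable.comp (primrec_oddBits.to_comp.comp Computable.fst) Computable.snd
  mono _ _ n b h hb := Ψ.mono _ _ n b (oddBits_prefix h) hb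

lemma eval_onRight (Ψ : TuringFunctional) (r : Cantor) :
    Ψ.onRight.eval r = Ψ.eval (rightC r) := by
  ext z
  simp only [mem_eval_iff, onRight, oddBits_initSeg]
  refine forall_congr' fun n => ⟨fun ⟨s, hs⟩ => ⟨s / 2, hs⟩, fun ⟨s, hs⟩ => ⟨2 * s, ?_⟩⟩
  rwa [Nat.mul_div_cancel_left s two_pos]

end TuringFunctional

theorem wLe_of_sWLe {f g : MFn} (h : sWLe f g) : wLe f g := by
  obtain ⟨Φ, Ψ, hΦΨ⟩ := h
  refine ⟨Φ, Ψ.onRight, fun G hG => ?_⟩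
  convert hΦΨ G hG using 2 with p
  simp only [TuringFunctional.eval_onRight, rightC_pairC]
  rfl

/-! ### Names in the represented spaces -/

/-- The index `i` of a name `⟨i, x⟩` in the coproduct representation, read off its first bit. -/
def tag (p : Cantor) : ℕ := (!p 0).toNat

lemma tag_eq_of_leftC_eq_natSet {p : Cantor} {i : ℕ} (hi : i < 2) (h : leftC p = natSet i) :
    tag p = i := by
  have h0 := congrFun h 0
  interval_cases i <;> simp_all [tag, leftC, natSet]

lemma tag_pairC (p q : Cantor) : tag (pairC p q) = tag p := by
  simp [tag, pairC]

lemma natSet_one_ne_zero : natSet 1 ≠ natSet 0 := fun h => by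
  simpa [natSet] using congrFun h 0

lemma mem_sum_δ {A B : RepSp} {r : Cantor} {z : A.X ⊕ B.X} :
    z ∈ (A.sum B).δ r ↔ z ∈ (if leftC r = natSet 0 then (A.δ (rightC r)).map Sum.inl
      else if leftC r = natSet 1 then (B.δ (rightC r)).map Sum.inr else Part.none) :=
  Iff.rfl

lemma inl_mem_sum_δ {A B : RepSp} {r : Cantor} {x : A.X} :
    Sum.inl x ∈ (A.sum B).δ r ↔ leftC r = natSet 0 ∧ x ∈ A.δ (rightC r) := by
  rw [mem_sum_δ]
  split_ifs <;> simp [*, natSet_one_ne_zero, Part.mem_map_iff]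

lemma inr_mem_sum_δ {A B : RepSp} {r : Cantor} {y : B.X} :
    Sum.inr y ∈ (A.sum B).δ r ↔ leftC r = natSet 1 ∧ y ∈ B.δ (rightC r) := by
  rw [mem_sum_δ]
  split_ifs <;> simp [*, natSet_one_ne_zero.symm, Part.mem_map_iff]

lemma mem_prod_δ {A B : RepSp} {r : Cantor} {x : A.X} {y : B.X} :
    (x, y) ∈ (A.prod B).δ r ↔ x ∈ A.δ (leftC r) ∧ y ∈ B.δ (rightC r) := by
  change (x, y) ∈ (A.δ (leftC r)).bind (fun x => (B.δ (rightC r)).map fun y => (x, y)) ↔ _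
  simp [Part.mem_bind_iff, Part.mem_map_iff]

lemma some_mem_hat_δ {A : RepSp} {a : Cantor} {y : A.X} :
    some y ∈ A.hat.δ a ↔ TotalMonotoneApprox a ∧ y ∈ A.δ (eVal a) := by
  change some y ∈ Part.some ((evalMA a).bind A.δ).toOption ↔ _
  rw [Part.mem_some_iff, eq_comm, Part.toOption_eq_some_iff]
  constructor
  · intro h
    obtain ⟨_, ⟨ha, rfl⟩, hy⟩ := Part.mem_bind_iff.mp h
    exact ⟨ha, hy⟩
  · exact fun ⟨ha, hy⟩ => Part.mem_bind_iff.mpr ⟨_, ⟨ha, rfl⟩, hy⟩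

lemma some_mem_hat_δ_maEncode {A : RepSp} {q : Cantor} {y : A.X} :
    some y ∈ A.hat.δ (maEncode q) ↔ y ∈ A.δ q := by
  simp [some_mem_hat_δ, maEncode_total, eVal_maEncode]

lemma not_totalMonotoneApprox_zeroSeq : ¬ TotalMonotoneApprox zeroSeq := fun h => by
  obtain ⟨_, _, _, h0⟩ := h.2 0
  exact Bool.false_ne_true h0

lemma none_mem_hat_δ_zeroSeq {A : RepSp} : (none : Option A.X) ∈ A.hat.δ zeroSeq := by
  change none ∈ Part.some ((evalMA zeroSeq).bind A.δ).toOption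
  rw [Part.mem_some_iff, eq_comm, Part.toOption_eq_none_iff]
  exact fun ⟨ha, _⟩ => not_totalMonotoneApprox_zeroSeq ha

theorem sWLe_of_solution_map {A B C : RepSp} {F : A.X → Set B.X} {G : A.X → Set C.X}
    (Ψ : TuringFunctional) (hdom : ∀ x, (F x).Nonempty → (G x).Nonempty)
    (hsol : ∀ x q z, z ∈ C.δ q → z ∈ G x → ∃ q' ∈ Ψ.eval q, ∃ y ∈ B.δ q', y ∈ F x) :
    sWLe ⟨A, B, F⟩ ⟨A, C, G⟩ := by
  refine ⟨TuringFunctional.id, Ψ, fun G' hG' p x hx hne => ?_⟩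
  rw [pcomp_eval_id]
  obtain ⟨q, hq, z, hz, hzG⟩ := hG' p x hx (hdom x hne)
  obtain ⟨q', hq', y, hy, hyF⟩ := hsol x q z hz hzG
  exact ⟨q', Part.mem_bind_iff.mpr ⟨q, hq, hq'⟩, y, hy, hyF⟩

theorem wLe_of_solution_map {A B C : RepSp} {F : A.X → Set B.X} {G : A.X → Set C.X}
    (Ψ : TuringFunctional) (hdom : ∀ x, (F x).Nonempty → (G x).Nonempty)
    (hsol : ∀ x p q z, x ∈ A.δ p → z ∈ C.δ q → z ∈ G x →
      ∃ q' ∈ Ψ.eval (pairC p q), ∃ y ∈ B.δ q', y ∈ F x) :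
    wLe ⟨A, B, F⟩ ⟨A, C, G⟩ := by
  refine ⟨TuringFunctional.id, Ψ, fun G' hG' p x hx hne => ?_⟩
  rw [pcomp_eval_id]
  obtain ⟨q, hq, z, hz, hzG⟩ := hG' p x hx (hdom x hne)
  obtain ⟨q', hq', y, hy, hyF⟩ := hsol x p q z hx hz hzG
  exact ⟨q', Part.mem_bind_iff.mpr ⟨q, hq, hq'⟩, y, hy, hyF⟩

lemma MFn.boxplus_nonempty_iff_sqcup_nonempty (f g : MFn) (x : f.A.X ⊕ g.A.X) :
    ((f.boxplus g).f x).Nonempty ↔ ((f.sqcup g).f x).Nonempty := by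
  rcases x with x | x
  · exact ⟨fun ⟨_, ⟨y, hy, _⟩, _⟩ => ⟨_, y, hy, rfl⟩,
      fun ⟨_, y, hy, _⟩ => ⟨(some y, none), ⟨y, hy, rfl⟩, trivial⟩⟩
  · exact ⟨fun ⟨_, _, ⟨y, hy, _⟩⟩ => ⟨_, y, hy, rfl⟩,
      fun ⟨_, y, hy, _⟩ => ⟨(none, some y), trivial, ⟨y, hy, rfl⟩⟩⟩

/-! ### `f ⊞ g ≤_sW f ⊔ g` -/

lemma maEncode_apply (q : Cantor) (k : ℕ) :
    maEncode q k = decide (k.unpair.2 = Nat.pair k.unpair.1 (q k.unpair.1).toNat) := by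
  simp only [maEncode, decide_eq_decide]
  constructor
  · rintro ⟨n, rfl⟩
    simp [tpl]
  · intro h
    exact ⟨k.unpair.1, by rw [tpl, ← h, Nat.pair_unpair]⟩

/-- From a name `⟨i, y⟩` of a solution of `f ⊔ g`, a name of a solution of `f ⊞ g`: `y` encoded
as a total monotone approximation in component `i`, and the empty approximation in the other. -/
def boxOut (q : Cantor) : Cantor :=
  if tag q = 0 then pairC (maEncode (rightC q)) zeroSeq else pairC zeroSeq (maEncode (rightC q))

lemma boxOut_apply (q : Cantor) (m : ℕ) :
    boxOut q m = (decide (m % 2 = tag q) && maEncode (rightC q) (m / 2)) := by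
  unfold boxOut tag
  cases q 0 <;> rcases Nat.mod_two_eq_zero_or_one m with h | h <;> simp [pairC, h, zeroSeq]

lemma boxOut_congr {q q' : Cantor} {m : ℕ} (h : ∀ i ≤ 2 * (m / 2).unpair.1 + 1, q i = q' i) :
    boxOut q m = boxOut q' m := by
  have htag : tag q = tag q' := by simp [tag, h 0 (Nat.zero_le _)]
  have hbit : rightC q (m / 2).unpair.1 = rightC q' (m / 2).unpair.1 := h _ le_rfl
  rw [boxOut_apply, boxOut_apply, maEncode_apply, maEncode_apply, htag, hbit]

lemma primrec_boxOut : Primrec₂ fun (σ : List Bool) m => boxOut (σ.getD · false) m := by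
  have hbit : Primrec₂ fun (σ : List Bool) (i : ℕ) => σ.getD i false := Primrec.list_getD false
  have htoNat : Primrec Bool.toNat := Primrec.dom_bool _
  have hk : Primrec fun a : List Bool × ℕ => a.2 / 2 :=
    Primrec.nat_div.comp Primrec.snd (Primrec.const 2)
  have hn : Primrec fun a : List Bool × ℕ => (a.2 / 2).unpair.1 :=
    Primrec.fst.comp (Primrec.unpair.comp hk)
  have htag : Primrec fun a : List Bool × ℕ => (!a.1.getD 0 false).toNat :=
    htoNat.comp (Primrec.not.comp (hbit.comp Primrec.fst (Primrec.const 0)))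
  have hval : Primrec fun a : List Bool × ℕ =>
      (a.1.getD (2 * (a.2 / 2).unpair.1 + 1) false).toNat :=
    htoNat.comp (hbit.comp Primrec.fst
      (Primrec.succ.comp (Primrec.nat_mul.comp (Primrec.const 2) hn)))
  refine (Primrec.and.comp
    (Primrec.eq.comp (Primrec.nat_mod.comp Primrec.snd (Primrec.const 2)) htag).decide
    (Primrec.eq.comp (Primrec.snd.comp (Primrec.unpair.comp hk))
      (Primrec₂.natPair.comp hn hval)).decide).of_eq fun a => ?_
  simp only [boxOut_apply, maEncode_apply, tag, rightC]
  congr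

lemma primrec_boxUse : Primrec fun m : ℕ => 2 * (m / 2).unpair.1 + 1 :=
  Primrec.succ.comp (Primrec.nat_mul.comp (Primrec.const 2)
    (Primrec.fst.comp (Primrec.unpair.comp (Primrec.nat_div.comp Primrec.id (Primrec.const 2)))))

def boxTF : TuringFunctional :=
  .ofModulus boxOut (fun m => 2 * (m / 2).unpair.1 + 1) primrec_boxOut primrec_boxUse

lemma eval_boxTF (q : Cantor) : boxTF.eval q = Part.some (boxOut q) :=
  TuringFunctional.eval_ofModulus (F := boxOut) primrec_boxOut primrec_boxUse
    (fun _ _ _ h => boxOut_congr h) q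

lemma sWLe_boxplus_sqcup (f g : MFn) : sWLe (f.boxplus g) (f.sqcup g) := by
  refine sWLe_of_solution_map (F := (f.boxplus g).f) (G := (f.sqcup g).f) boxTF
    (fun x => (MFn.boxplus_nonempty_iff_sqcup_nonempty f g x).mp) ?_
  rintro (x | x) q _ hz ⟨y, hy, rfl⟩
  · obtain ⟨hq, hyq⟩ := inl_mem_sum_δ.mp hz
    have hbox : boxOut q = pairC (maEncode (rightC q)) zeroSeq :=
      if_pos (tag_eq_of_leftC_eq_natSet (by norm_num) hq)
    refine ⟨_, eval_boxTF q ▸ Part.mem_some _, (some y, none), ?_, ⟨y, hy, rfl⟩, trivial⟩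
    rw [hbox]
    exact mem_prod_δ.mpr ⟨by rw [leftC_pairC]; exact some_mem_hat_δ_maEncode.mpr hyq,
      by rw [rightC_pairC]; exact none_mem_hat_δ_zeroSeq⟩
  · obtain ⟨hq, hyq⟩ := inr_mem_sum_δ.mp hz
    have hbox : boxOut q = pairC zeroSeq (maEncode (rightC q)) :=
      if_neg (by rw [tag_eq_of_leftC_eq_natSet (by norm_num) hq]; norm_num)
    refine ⟨_, eval_boxTF q ▸ Part.mem_some _, (none, some y), ?_, trivial, ⟨y, hy, rfl⟩⟩
    rw [hbox]
    exact mem_prod_δ.mpr ⟨by rw [leftC_pairC]; exact none_mem_hat_δ_zeroSeq,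
      by rw [rightC_pairC]; exact some_mem_hat_δ_maEncode.mpr hyq⟩

/-! ### `f ⊔ g ≤_W f ⊞ g` -/

/-- `j` codes a triple `⟨n, s, i⟩` in the approximation `a`. -/
def IsEntry (a : Cantor) (n j : ℕ) : Prop := a j = true ∧ j.unpair.1 = n

lemma eVal_eq_of_isEntry {a : Cantor} (ha : MonotoneApprox a) {n j : ℕ} (hj : IsEntry a n j) :
    eVal a n = decide (j.unpair.2.unpair.2 = 1) := by
  obtain ⟨hj, rfl⟩ := hj
  obtain ⟨n, s, i, -, rfl⟩ := ha.1 j hj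
  simp only [tpl, Nat.unpair_pair, eVal, decide_eq_decide]
  exact ⟨fun ⟨s', h'⟩ => (ha.2.1 n s' s 1 i h' hj).2.symm, fun hi => ⟨s, hi ▸ hj⟩⟩

/-- The approximation `aᵢ` inside `r = ⟨p, ⟨a₀, a₁⟩⟩`, selected by the tag `i` of `p`. -/
def selectedApprox (r : Cantor) : Cantor := fun k => rightC r (2 * k + tag r)

def sqcupOut (r : Cantor) : Cantor := inC (tag r) (eVal (selectedApprox r))

/-- Bit `2k` of `sqcupOut r` needs only the tag; bit `2k + 1` is read off the entries `⟨k, s, i⟩`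
found so far in the selected approximation, which all agree when it is a monotone
approximation. -/
def sqcupApprox (σ : List Bool) (m : ℕ) : Option Bool :=
  if σ = [] then none
  else if m % 2 = 0 then some (decide (m / 2 = tag (σ.getD · false)))
  else if ∃ j < σ.length, IsEntry (selectedApprox (σ.getD · false)) (m / 2) j then
    some (decide (∃ j < σ.length,
      IsEntry (selectedApprox (σ.getD · false)) (m / 2) j ∧ j.unpair.2.unpair.2 = 1))
  else none

lemma primrec_sqcupApprox : Primrec₂ sqcupApprox := by
  have hbit : Primrec₂ fun (σ : List Bool) (i : ℕ) => σ.getD i false := Primrec.list_getD false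
  have htag : Primrec fun a : List Bool × ℕ => tag (a.1.getD · false) :=
    (Primrec.dom_bool _).comp (Primrec.not.comp (hbit.comp Primrec.fst (Primrec.const 0)))
  have hentry : PrimrecRel fun (j : ℕ) (a : List Bool × ℕ) =>
      IsEntry (selectedApprox (a.1.getD · false)) (a.2 / 2) j := by
    refine PrimrecPred.and (Primrec.eq.comp (hbit.comp (Primrec.fst.comp Primrec.snd) ?_)
      (Primrec.const true)) (Primrec.eq.comp (Primrec.fst.comp (Primrec.unpair.comp Primrec.fst))
        (Primrec.nat_div.comp (Primrec.snd.comp Primrec.snd) (Primrec.const 2)))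
    exact Primrec.succ.comp (Primrec.nat_mul.comp (Primrec.const 2) (Primrec.nat_add.comp
      (Primrec.nat_mul.comp (Primrec.const 2) Primrec.fst) (htag.comp Primrec.snd)))
  have hentry1 : PrimrecRel fun (j : ℕ) (a : List Bool × ℕ) =>
      IsEntry (selectedApprox (a.1.getD · false)) (a.2 / 2) j ∧ j.unpair.2.unpair.2 = 1 :=
    hentry.and (Primrec.eq.comp (Primrec.snd.comp (Primrec.unpair.comp
      (Primrec.snd.comp (Primrec.unpair.comp Primrec.fst)))) (Primrec.const 1))
  have hlen : Primrec fun a : List Bool × ℕ => a.1.length := Primrec.list_length.comp Primrec.fst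
  have hex : PrimrecPred fun a : List Bool × ℕ =>
      ∃ j < a.1.length, IsEntry (selectedApprox (a.1.getD · false)) (a.2 / 2) j :=
    ((PrimrecRel.exists_mem_list hentry).comp (Primrec.list_range.comp hlen) Primrec.id).of_eq
      fun _ => by simp
  have hex1 : PrimrecPred fun a : List Bool × ℕ => ∃ j < a.1.length,
      IsEntry (selectedApprox (a.1.getD · false)) (a.2 / 2) j ∧ j.unpair.2.unpair.2 = 1 :=
    ((PrimrecRel.exists_mem_list hentry1).comp (Primrec.list_range.comp hlen) Primrec.id).of_eq
      fun _ => by simp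
  exact Primrec.ite (Primrec.eq.comp Primrec.fst (Primrec.const [])) (Primrec.const none)
    (Primrec.ite (Primrec.eq.comp (Primrec.nat_mod.comp Primrec.snd (Primrec.const 2))
        (Primrec.const 0))
      (Primrec.option_some.comp (Primrec.eq.comp (Primrec.nat_div.comp Primrec.snd
        (Primrec.const 2)) htag).decide)
      (Primrec.ite hex
        ((Primrec.option_some.comp hex1.decide).of_eq
          fun _ => congrArg some (decide_eq_decide.mpr Iff.rfl))
        (Primrec.const none)))

def sqcupTF : TuringFunctional := .ofApprox sqcupApprox primrec_sqcupApprox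

lemma tag_initSeg {r : Cantor} {t : ℕ} (ht : 0 < t) :
    tag ((initSeg r t).getD · false) = tag r := by
  simp only [tag, getD_initSeg r ht]

lemma selectedApprox_initSeg_eq_true {r : Cantor} {t j : ℕ} (ht : 0 < t) :
    selectedApprox ((initSeg r t).getD · false) j = true ↔
      2 * (2 * j + tag r) + 1 < t ∧ selectedApprox r j = true := by
  simp only [selectedApprox, rightC, tag_initSeg ht]
  exact getD_initSeg_eq_true

lemma eval_sqcupTF (r : Cantor) (ha : TotalMonotoneApprox (selectedApprox r)) :
    sqcupTF.eval r = Part.some (sqcupOut r) := by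
  refine TuringFunctional.eval_ofApprox _ (fun m => ?_) (fun m t b h => ?_)
  · rcases Nat.mod_two_eq_zero_or_one m with hm | hm
    · refine ⟨1, ?_⟩
      rw [sqcupApprox, if_neg (initSeg_ne_nil.mpr one_pos), if_pos hm]
      rfl
    · obtain ⟨s, i, -, hsi⟩ := ha.2 (m / 2)
      set j := tpl (m / 2) s i
      set t := 2 * (2 * j + tag r) + 2
      have hentry : IsEntry (selectedApprox ((initSeg r t).getD · false)) (m / 2) j :=
        ⟨(selectedApprox_initSeg_eq_true (by omega)).mpr ⟨by omega, hsi⟩, by simp [j, tpl]⟩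
      refine ⟨t, ?_⟩
      rw [sqcupApprox, if_neg (initSeg_ne_nil.mpr (by omega)), if_neg (by omega),
        if_pos ⟨j, by rw [length_initSeg]; omega, hentry⟩]
      rfl
  · unfold sqcupApprox at h
    split_ifs at h with h0 hm hex
    · rw [← Option.some.inj h, tag_initSeg (initSeg_ne_nil.mp h0)]
      simp [sqcupOut, inC, pairC, natSet, hm]
    · have ht := initSeg_ne_nil.mp h0
      have toR : ∀ {j}, IsEntry (selectedApprox ((initSeg r t).getD · false)) (m / 2) j →
          IsEntry (selectedApprox r) (m / 2) j :=
        fun hj => ⟨((selectedApprox_initSeg_eq_true ht).mp hj.1).2, hj.2⟩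
      obtain ⟨j₀, hj₀, hentry₀⟩ := hex
      have key := eVal_eq_of_isEntry ha.1 (toR hentry₀)
      rw [← Option.some.inj h]
      simp only [sqcupOut, inC, pairC, hm, if_false]
      rw [key, decide_eq_decide]
      constructor
      · rintro ⟨j, -, hj, hj1⟩
        simpa [hj1] using (eVal_eq_of_isEntry ha.1 (toR hj)).symm.trans key
      · exact fun h1 => ⟨j₀, hj₀, hentry₀, h1⟩

lemma eval_sqcupTF_pairC {p q : Cantor} {i : ℕ} (hi : tag p = i)
    (ha : TotalMonotoneApprox fun k => q (2 * k + i)) :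
    sqcupTF.eval (pairC p q) = Part.some (inC i (eVal fun k => q (2 * k + i))) := by
  have hsel : selectedApprox (pairC p q) = fun k => q (2 * k + i) := by
    funext k
    simp [selectedApprox, rightC_pairC, tag_pairC, hi]
  rw [eval_sqcupTF _ (hsel ▸ ha), sqcupOut, hsel, tag_pairC, hi]

lemma wLe_sqcup_boxplus (f g : MFn) : wLe (f.sqcup g) (f.boxplus g) := by
  refine wLe_of_solution_map (F := (f.sqcup g).f) (G := (f.boxplus g).f) sqcupTF
    (fun x => (MFn.boxplus_nonempty_iff_sqcup_nonempty f g x).mpr) ?_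
  rintro (x | x) p q ⟨y₀, y₁⟩ hx hz hzG
  · obtain ⟨⟨y, hy, rfl⟩, -⟩ := hzG
    obtain ⟨ha, hyq⟩ := some_mem_hat_δ.mp (mem_prod_δ.mp hz).1
    have htag := tag_eq_of_leftC_eq_natSet (by norm_num) (inl_mem_sum_δ.mp hx).1
    refine ⟨_, eval_sqcupTF_pairC (i := 0) htag ha ▸ Part.mem_some _, Sum.inl y, ?_, ⟨y, hy, rfl⟩⟩
    exact inl_mem_sum_δ.mpr ⟨leftC_pairC _ _, by rw [inC, rightC_pairC]; exact hyq⟩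
  · obtain ⟨-, ⟨y, hy, rfl⟩⟩ := hzG
    obtain ⟨ha, hyq⟩ := some_mem_hat_δ.mp (mem_prod_δ.mp hz).2
    have htag := tag_eq_of_leftC_eq_natSet (by norm_num) (inr_mem_sum_δ.mp hx).1
    refine ⟨_, eval_sqcupTF_pairC (i := 1) htag ha ▸ Part.mem_some _, Sum.inr y, ?_, ⟨y, hy, rfl⟩⟩
    exact inr_mem_sum_δ.mpr ⟨leftC_pairC _ _, by rw [inC, rightC_pairC]; exact hyq⟩

/-- Proposition 3.11: `f ⊞ g ≡_W f ⊔ g`; indeed `f ⊞ g ≤_sW f ⊔ g` and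
`f ⊔ g ≤_W f ⊞ g`. -/
theorem stmt8 : ∀ f g : MFn,
    wEq (f.boxplus g) (f.sqcup g) ∧
    sWLe (f.boxplus g) (f.sqcup g) ∧ wLe (f.sqcup g) (f.boxplus g) := fun f g =>
  ⟨⟨wLe_of_sWLe (sWLe_boxplus_sqcup f g), wLe_sqcup_boxplus f g⟩,
    sWLe_boxplus_sqcup f g, wLe_sqcup_boxplus f g⟩

end

end StrongWeihrauch
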